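/- Fix t > 0, a < b, u_a < 0 < u_b, and x with b < x. For ε > 0 set A_ε = (x-a)/√(2tε), B_ε = (x-b)/√(2tε). Then the quotient ((x-a)/(2t))·[((e^{u_a/ε}−1)/(A_ε e^{A_ε² − u_b/ε})) + ((x-b)/(x-a))·((1 − e^{-u_b/ε})/(B_ε e^{B_ε² − u_b/ε}))] divided by [√π + erfc(A_ε) e^{u_b/ε}(e^{u_a/ε} − 1) + erfc(B_ε) e^{u_b/ε}(1 − e^{-u_b/ε})] tends, as ε → 0⁺, to (x−b)/t when b < x < b + √(2 u_b t), and to 0 when x > b + √(2 u_b t). -/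

import Mathlib

/-!
Put `A = (x-a)/√(2tε)`, `B = (x-b)/√(2tε)`, `P = A e^{A² - u_b/ε}`, `Q = B e^{B² - u_b/ε}` and
`c_A = A erfc(A) e^{A²}`, `c_B = B erfc(B) e^{B²}`. Since `erfc(A) e^{u_b/ε} = c_A / P` (likewise
for `B`), the quotient reads `k (U/P + r V/Q) / (√π + c_A U/P + c_B V/Q)` with `k = (x-a)/(2t)`,
`r = (x-b)/(x-a)`, `U = e^{u_a/ε} - 1 → -1`, `V = 1 - e^{-u_b/ε} → 1`, and `c_A, c_B → 1/2` by
one integration by parts.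

For `z = c/√(2tε)` we have `u_b/ε = (2u_b t/c²) z²`, so `z e^{z² - u_b/ε} = z e^{κ z²}` with
`κ = 1 - 2u_b t/c²` and `z → ∞`. If `(x-b)² > 2u_b t`, both `P` and `Q` blow up and the quotient tends to `0`.
If `(x-b)² < 2u_b t`, then `Q → 0` and `Q/P = r e^{((x-b)² - (x-a)²)/(2tε)} → 0`; multiplying
numerator and denominator by `Q` gives the limit `k r / (1/2) = (x-b)/t`.
-/

noncomputable def erfc (z : ℝ) : ℝ := ∫ s in Set.Ioi z, Real.exp (-s^2)

open Filter Topology Real Set MeasureTheory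

lemma integrable_exp_neg_sq : Integrable fun s : ℝ => exp (-s ^ 2) := by
  simpa using integrable_exp_neg_mul_sq (b := 1) one_pos

lemma exp_neg_sq_div_le {z s : ℝ} (hz : 0 < z) (hzs : z ≤ s) :
    exp (-s ^ 2) / (2 * s ^ 2) ≤ 1 / (2 * z ^ 2) * exp (-s ^ 2) := by
  rw [one_div_mul_eq_div]
  gcongr

lemma integrableOn_exp_neg_sq_div_sq {z : ℝ} (hz : 0 < z) :
    IntegrableOn (fun s : ℝ => exp (-s ^ 2) / (2 * s ^ 2)) (Ioi z) := by
  refine Integrable.mono' (integrable_exp_neg_sq.integrableOn.const_mul (1 / (2 * z ^ 2))) ?_ ?_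
  · refine ContinuousOn.aestronglyMeasurable ?_ measurableSet_Ioi
    exact ContinuousOn.div (by fun_prop) (by fun_prop) fun s hs => by
      have : 0 < s := hz.trans hs
      positivity
  · filter_upwards [ae_restrict_mem measurableSet_Ioi] with s hs
    rw [norm_of_nonneg (by positivity)]
    exact exp_neg_sq_div_le hz (le_of_lt hs)

lemma hasDerivAt_neg_exp_neg_sq_div {s : ℝ} (hs : s ≠ 0) :
    HasDerivAt (fun s : ℝ => -(exp (-s ^ 2) / (2 * s)))
      (exp (-s ^ 2) + exp (-s ^ 2) / (2 * s ^ 2)) s := by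
  have hexp : HasDerivAt (fun s : ℝ => exp (-s ^ 2)) (exp (-s ^ 2) * -(2 * s)) s := by
    simpa using ((hasDerivAt_pow 2 s).neg).exp
  have hlin : HasDerivAt (fun s : ℝ => 2 * s) 2 s := by
    simpa using (hasDerivAt_id s).const_mul (2 : ℝ)
  refine (hexp.fun_div hlin (by positivity)).fun_neg.congr_deriv ?_
  field_simp
  ring

lemma erfc_add_integral_eq {z : ℝ} (hz : 0 < z) :
    erfc z + ∫ s in Ioi z, exp (-s ^ 2) / (2 * s ^ 2) = exp (-z ^ 2) / (2 * z) := by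
  have hderiv : ∀ s ∈ Ici z, HasDerivAt (fun s : ℝ => -(exp (-s ^ 2) / (2 * s)))
      (exp (-s ^ 2) + exp (-s ^ 2) / (2 * s ^ 2)) s := fun s hs =>
    hasDerivAt_neg_exp_neg_sq_div (hz.trans_le hs).ne'
  have hlim : Tendsto (fun s : ℝ => -(exp (-s ^ 2) / (2 * s))) atTop (𝓝 0) := by
    simpa using ((tendsto_exp_atBot.comp (tendsto_neg_atTop_atBot.comp
      (tendsto_pow_atTop two_ne_zero))).div_atTop
        (tendsto_id.const_mul_atTop two_pos)).neg
  have hint := integrable_exp_neg_sq.integrableOn.add (integrableOn_exp_neg_sq_div_sq hz)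
  have := integral_Ioi_of_hasDerivAt_of_tendsto' hderiv hint hlim
  rw [integral_add integrable_exp_neg_sq.integrableOn (integrableOn_exp_neg_sq_div_sq hz)] at this
  rw [erfc, this]
  ring

lemma erfc_le {z : ℝ} (hz : 0 < z) : erfc z ≤ exp (-z ^ 2) / (2 * z) := by
  have : 0 ≤ ∫ s in Ioi z, exp (-s ^ 2) / (2 * s ^ 2) :=
    setIntegral_nonneg measurableSet_Ioi fun s _ => by positivity
  linarith [erfc_add_integral_eq hz]

lemma le_erfc {z : ℝ} (hz : 0 < z) :
    exp (-z ^ 2) / (2 * z) - exp (-z ^ 2) / (4 * z ^ 3) ≤ erfc z := by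
  have hJ : ∫ s in Ioi z, exp (-s ^ 2) / (2 * s ^ 2) ≤ 1 / (2 * z ^ 2) * erfc z := by
    rw [erfc, ← integral_const_mul]
    exact setIntegral_mono_on (integrableOn_exp_neg_sq_div_sq hz)
      (integrable_exp_neg_sq.integrableOn.const_mul _) measurableSet_Ioi
      fun s hs => exp_neg_sq_div_le hz (le_of_lt hs)
  have hup : 1 / (2 * z ^ 2) * erfc z ≤ exp (-z ^ 2) / (4 * z ^ 3) :=
    calc 1 / (2 * z ^ 2) * erfc z ≤ 1 / (2 * z ^ 2) * (exp (-z ^ 2) / (2 * z)) := by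
          gcongr; exact erfc_le hz
      _ = exp (-z ^ 2) / (4 * z ^ 3) := by field_simp; ring
  linarith [erfc_add_integral_eq hz]

lemma tendsto_mul_erfc_mul_exp_sq :
    Tendsto (fun z : ℝ => z * erfc z * exp (z ^ 2)) atTop (𝓝 (1 / 2)) := by
  have hlow : Tendsto (fun z : ℝ => 1 / 2 - 1 / (4 * z ^ 2)) atTop (𝓝 (1 / 2)) := by
    have := (tendsto_const_nhds (x := (1 : ℝ))).div_atTop
      ((tendsto_pow_atTop two_ne_zero).const_mul_atTop (by norm_num : (0 : ℝ) < 4))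
    simpa using (tendsto_const_nhds (x := (1 / 2 : ℝ))).sub this
  refine tendsto_of_tendsto_of_tendsto_of_le_of_le' hlow tendsto_const_nhds ?_ ?_ <;>
    filter_upwards [eventually_gt_atTop 0] with z hz
  · calc 1 / 2 - 1 / (4 * z ^ 2)
        = z * (exp (-z ^ 2) / (2 * z) - exp (-z ^ 2) / (4 * z ^ 3)) * exp (z ^ 2) := by
          rw [exp_neg]; field_simp
      _ ≤ z * erfc z * exp (z ^ 2) := by gcongr; exact le_erfc hz
  · calc z * erfc z * exp (z ^ 2) ≤ z * (exp (-z ^ 2) / (2 * z)) * exp (z ^ 2) := by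
          gcongr; exact erfc_le hz
      _ = 1 / 2 := by rw [exp_neg]; field_simp

lemma erfc_mul_exp_eq {z : ℝ} (hz : z ≠ 0) (w : ℝ) :
    erfc z * exp w = z * erfc z * exp (z ^ 2) / (z * exp (z ^ 2 - w)) := by
  rw [exp_sub]
  field_simp

section Quotient

variable {ι : Type*} {l : Filter ι} {U V P Q cA cB : ι → ℝ} {k r s U₀ V₀ a₀ b₀ : ℝ}

lemma tendsto_quotient_of_tendsto_inv (hU : Tendsto U l (𝓝 U₀)) (hV : Tendsto V l (𝓝 V₀))
    (hcA : Tendsto cA l (𝓝 a₀)) (hcB : Tendsto cB l (𝓝 b₀))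
    (hP : Tendsto (fun i => (P i)⁻¹) l (𝓝 0)) (hQ : Tendsto (fun i => (Q i)⁻¹) l (𝓝 0))
    (hs : s ≠ 0) :
    Tendsto (fun i => k * (U i / P i + r * (V i / Q i)) / (s + cA i / P i * U i + cB i / Q i * V i))
      l (𝓝 0) := by
  have hnum : Tendsto (fun i => k * (U i * (P i)⁻¹ + r * (V i * (Q i)⁻¹))) l (𝓝 0) := by
    simpa using ((hU.mul hP).add ((hV.mul hQ).const_mul r)).const_mul k
  have hden : Tendsto (fun i => s + cA i * (P i)⁻¹ * U i + cB i * (Q i)⁻¹ * V i) l (𝓝 s) := by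
    simpa using (((hcA.mul hP).mul hU).const_add s).add ((hcB.mul hQ).mul hV)
  simpa only [div_eq_mul_inv, zero_mul] using hnum.mul (hden.inv₀ hs)

lemma tendsto_quotient_of_tendsto_zero (hU : Tendsto U l (𝓝 U₀)) (hV : Tendsto V l (𝓝 V₀))
    (hcA : Tendsto cA l (𝓝 a₀)) (hcB : Tendsto cB l (𝓝 b₀))
    (hQ : Tendsto Q l (𝓝 0)) (hQP : Tendsto (fun i => Q i / P i) l (𝓝 0))
    (hQ₀ : ∀ᶠ i in l, Q i ≠ 0) (hV₀ : V₀ ≠ 0) (hb₀ : b₀ ≠ 0) :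
    Tendsto (fun i => k * (U i / P i + r * (V i / Q i)) / (s + cA i / P i * U i + cB i / Q i * V i))
      l (𝓝 (k * r / b₀)) := by
  have hnum : Tendsto (fun i => k * (U i * (Q i / P i) + r * V i)) l (𝓝 (k * (r * V₀))) := by
    simpa using ((hU.mul hQP).add (hV.const_mul r)).const_mul k
  have hden : Tendsto (fun i => s * Q i + cA i * U i * (Q i / P i) + cB i * V i) l
      (𝓝 (b₀ * V₀)) := by
    simpa using ((hQ.const_mul s).add ((hcA.mul hU).mul hQP)).add (hcB.mul hV)
  have hlim := hnum.div hden (mul_ne_zero hb₀ hV₀)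
  rw [show k * (r * V₀) / (b₀ * V₀) = k * r / b₀ by field_simp] at hlim
  refine hlim.congr' ?_
  filter_upwards [hQ₀] with i hi
  have hcancel : V i / Q i * Q i = V i := div_mul_cancel₀ _ hi
  rw [Pi.div_apply, ← mul_div_mul_right (k * (U i / P i + r * (V i / Q i))) _ hi]
  congr 1
  · linear_combination -(k * r) * hcancel
  · linear_combination -cB i * hcancel

end Quotient

section SmallViscosity

variable {t : ℝ}

lemma div_sqrt_pos {c ε : ℝ} (hc : 0 < c) (ht : 0 < t) (hε : 0 < ε) : 0 < c / √(2 * t * ε) :=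
  div_pos hc (sqrt_pos.2 (by positivity))

lemma div_sqrt_sq {c ε : ℝ} (ht : 0 < t) (hε : 0 < ε) :
    (c / √(2 * t * ε)) ^ 2 = c ^ 2 / (2 * t) / ε := by
  rw [div_pow, sq_sqrt (by positivity), div_div]

lemma tendsto_div_sqrt_atTop {c : ℝ} (hc : 0 < c) (ht : 0 < t) :
    Tendsto (fun ε : ℝ => c / √(2 * t * ε)) (𝓝[>] 0) atTop := by
  have hsqrt : Tendsto (fun ε : ℝ => √(2 * t * ε)) (𝓝[>] 0) (𝓝[>] 0) := by
    refine tendsto_nhdsWithin_iff.2 ⟨?_, ?_⟩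
    · exact ((continuous_sqrt.comp (continuous_const.mul continuous_id)).tendsto' 0 0
        (by simp)).mono_left nhdsWithin_le_nhds
    · filter_upwards [self_mem_nhdsWithin] with ε hε
      exact sqrt_pos.2 (mul_pos (by positivity) hε)
  simpa only [div_eq_mul_inv, Function.comp_def] using
    (tendsto_inv_nhdsGT_zero.comp hsqrt).const_mul_atTop hc

lemma tendsto_exp_div_nhdsGT_zero {κ : ℝ} (hκ : κ < 0) :
    Tendsto (fun ε : ℝ => exp (κ / ε)) (𝓝[>] 0) (𝓝 0) :=
  tendsto_exp_atBot.comp <| (tendsto_inv_nhdsGT_zero.const_mul_atTop_of_neg hκ).congr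
    fun ε => (div_eq_mul_inv κ ε).symm

lemma tendsto_mul_exp_mul_sq_atTop {κ : ℝ} (hκ : 0 < κ) :
    Tendsto (fun z : ℝ => z * exp (κ * z ^ 2)) atTop atTop :=
  tendsto_id.atTop_mul_atTop₀ <|
    tendsto_exp_atTop.comp ((tendsto_pow_atTop two_ne_zero).const_mul_atTop hκ)

lemma tendsto_mul_exp_mul_sq_zero {κ : ℝ} (hκ : κ < 0) :
    Tendsto (fun z : ℝ => z * exp (κ * z ^ 2)) atTop (𝓝 0) := by
  refine ((tendsto_rpow_abs_mul_exp_neg_mul_sq_cocompact (neg_pos.2 hκ) 1).mono_left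
    atTop_le_cocompact).congr' ?_
  filter_upwards [eventually_gt_atTop 0] with z hz
  simp [abs_of_pos hz]

lemma mul_exp_sub_div_eventuallyEq {c u : ℝ} (hc : 0 < c) (ht : 0 < t) :
    (fun ε : ℝ => c / √(2 * t * ε) * exp ((c / √(2 * t * ε)) ^ 2 - u / ε)) =ᶠ[𝓝[>] 0]
      (fun z : ℝ => z * exp ((1 - 2 * u * t / c ^ 2) * z ^ 2)) ∘
        (fun ε : ℝ => c / √(2 * t * ε)) := by
  filter_upwards [self_mem_nhdsWithin] with ε (hε : 0 < ε)
  simp only [Function.comp_apply, div_sqrt_sq ht hε]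
  congr 2
  field_simp

lemma tendsto_mul_exp_sub_div_atTop {c u : ℝ} (hc : 0 < c) (ht : 0 < t) (h : 2 * u * t < c ^ 2) :
    Tendsto (fun ε : ℝ => c / √(2 * t * ε) * exp ((c / √(2 * t * ε)) ^ 2 - u / ε))
      (𝓝[>] 0) atTop := by
  have hκ : 0 < 1 - 2 * u * t / c ^ 2 := sub_pos.2 ((div_lt_one (by positivity)).2 h)
  exact ((tendsto_mul_exp_mul_sq_atTop hκ).comp (tendsto_div_sqrt_atTop hc ht)).congr'
    (mul_exp_sub_div_eventuallyEq hc ht).symm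

lemma tendsto_mul_exp_sub_div_zero {c u : ℝ} (hc : 0 < c) (ht : 0 < t) (h : c ^ 2 < 2 * u * t) :
    Tendsto (fun ε : ℝ => c / √(2 * t * ε) * exp ((c / √(2 * t * ε)) ^ 2 - u / ε))
      (𝓝[>] 0) (𝓝 0) := by
  have hκ : 1 - 2 * u * t / c ^ 2 < 0 := sub_neg.2 ((one_lt_div (by positivity)).2 h)
  exact ((tendsto_mul_exp_mul_sq_zero hκ).comp (tendsto_div_sqrt_atTop hc ht)).congr'
    (mul_exp_sub_div_eventuallyEq hc ht).symm

lemma tendsto_mul_exp_sub_div_ratio {c c' u : ℝ} (h : c' ^ 2 < c ^ 2) (ht : 0 < t) :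
    Tendsto (fun ε : ℝ => c' / √(2 * t * ε) * exp ((c' / √(2 * t * ε)) ^ 2 - u / ε) /
      (c / √(2 * t * ε) * exp ((c / √(2 * t * ε)) ^ 2 - u / ε))) (𝓝[>] 0) (𝓝 0) := by
  have hκ : (c' ^ 2 - c ^ 2) / (2 * t) < 0 := div_neg_of_neg_of_pos (by linarith) (by positivity)
  have hlim : Tendsto (fun ε : ℝ => c' / c * exp ((c' ^ 2 - c ^ 2) / (2 * t) / ε)) (𝓝[>] 0)
      (𝓝 0) := by
    simpa using (tendsto_exp_div_nhdsGT_zero hκ).const_mul (c' / c)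
  refine hlim.congr' ?_
  filter_upwards [self_mem_nhdsWithin] with ε (hε : 0 < ε)
  have hs : √(2 * t * ε) ≠ 0 := (sqrt_pos.2 (by positivity)).ne'
  rw [mul_div_mul_comm, div_div_div_cancel_right₀ hs, ← exp_sub, div_sqrt_sq ht hε,
    div_sqrt_sq ht hε]
  congr 2
  field_simp
  ring

end SmallViscosity

theorem viscous_limit_region_b_d (a b u_a u_b t x : ℝ)
    (hab : a < b) (hua : u_a < 0) (hub : 0 < u_b) (ht : 0 < t) (hbx : b < x) :
    (x < b + Real.sqrt (2 * u_b * t) →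
      Filter.Tendsto
        (fun ε : ℝ =>
          ((x - a) / (2 * t) *
            ((Real.exp (u_a / ε) - 1) /
                ((x - a) / Real.sqrt (2 * t * ε) *
                  Real.exp (((x - a) / Real.sqrt (2 * t * ε)) ^ 2 - u_b / ε)) +
              (x - b) / (x - a) *
                ((1 - Real.exp (-u_b / ε)) /
                  ((x - b) / Real.sqrt (2 * t * ε) *
                    Real.exp (((x - b) / Real.sqrt (2 * t * ε)) ^ 2 - u_b / ε))))) /
          (Real.sqrt Real.pi
            + erfc ((x - a) / Real.sqrt (2 * t * ε)) * Real.exp (u_b / ε) *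
                (Real.exp (u_a / ε) - 1)
            + erfc ((x - b) / Real.sqrt (2 * t * ε)) * Real.exp (u_b / ε) *
                (1 - Real.exp (-u_b / ε))))
        (nhdsWithin 0 (Set.Ioi 0)) (nhds ((x - b) / t))) ∧
    (b + Real.sqrt (2 * u_b * t) < x →
      Filter.Tendsto
        (fun ε : ℝ =>
          ((x - a) / (2 * t) *
            ((Real.exp (u_a / ε) - 1) /
                ((x - a) / Real.sqrt (2 * t * ε) *
                  Real.exp (((x - a) / Real.sqrt (2 * t * ε)) ^ 2 - u_b / ε)) +
              (x - b) / (x - a) *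
                ((1 - Real.exp (-u_b / ε)) /
                  ((x - b) / Real.sqrt (2 * t * ε) *
                    Real.exp (((x - b) / Real.sqrt (2 * t * ε)) ^ 2 - u_b / ε))))) /
          (Real.sqrt Real.pi
            + erfc ((x - a) / Real.sqrt (2 * t * ε)) * Real.exp (u_b / ε) *
                (Real.exp (u_a / ε) - 1)
            + erfc ((x - b) / Real.sqrt (2 * t * ε)) * Real.exp (u_b / ε) *
                (1 - Real.exp (-u_b / ε))))
        (nhdsWithin 0 (Set.Ioi 0)) (nhds 0)) := by
  have hxa : 0 < x - a := by linarith
  have hxb : 0 < x - b := by linarith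
  have hU : Tendsto (fun ε : ℝ => exp (u_a / ε) - 1) (𝓝[>] 0) (𝓝 (-1)) := by
    simpa using (tendsto_exp_div_nhdsGT_zero hua).sub_const 1
  have hV : Tendsto (fun ε : ℝ => 1 - exp (-u_b / ε)) (𝓝[>] 0) (𝓝 1) := by
    simpa using (tendsto_exp_div_nhdsGT_zero (neg_lt_zero.2 hub)).const_sub 1
  have hcA := tendsto_mul_erfc_mul_exp_sq.comp (tendsto_div_sqrt_atTop hxa ht)
  have hcB := tendsto_mul_erfc_mul_exp_sq.comp (tendsto_div_sqrt_atTop hxb ht)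
  refine ⟨fun hx => ?_, fun hx => ?_⟩
  · have hsq : (x - b) ^ 2 < 2 * u_b * t := (lt_sqrt hxb.le).1 (by linarith)
    have hQ₀ : ∀ᶠ ε in 𝓝[>] (0 : ℝ),
        (x - b) / √(2 * t * ε) * exp (((x - b) / √(2 * t * ε)) ^ 2 - u_b / ε) ≠ 0 := by
      filter_upwards [self_mem_nhdsWithin] with ε hε using
        (mul_pos (div_sqrt_pos hxb ht hε) (exp_pos _)).ne'
    have hlim := tendsto_quotient_of_tendsto_zero (k := (x - a) / (2 * t))
      (r := (x - b) / (x - a)) (s := √π) hU hV hcA hcB (tendsto_mul_exp_sub_div_zero hxb ht hsq)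
      (tendsto_mul_exp_sub_div_ratio (c := x - a) (by nlinarith) ht) hQ₀ one_ne_zero
      one_half_pos.ne'
    rw [show (x - a) / (2 * t) * ((x - b) / (x - a)) / (1 / 2) = (x - b) / t by
      field_simp] at hlim
    refine hlim.congr' ?_
    filter_upwards [self_mem_nhdsWithin] with ε hε
    rw [erfc_mul_exp_eq (div_sqrt_pos hxa ht hε).ne', erfc_mul_exp_eq (div_sqrt_pos hxb ht hε).ne']
    rfl
  · have hsq : 2 * u_b * t < (x - b) ^ 2 := (sqrt_lt' hxb).1 (by linarith)
    have hP := tendsto_mul_exp_sub_div_atTop hxa ht (hsq.trans (by nlinarith))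
    have hQ := tendsto_mul_exp_sub_div_atTop hxb ht hsq
    refine (tendsto_quotient_of_tendsto_inv (k := (x - a) / (2 * t)) (r := (x - b) / (x - a))
      hU hV hcA hcB hP.inv_tendsto_atTop hQ.inv_tendsto_atTop (sqrt_pos.2 pi_pos).ne').congr' ?_
    filter_upwards [self_mem_nhdsWithin] with ε hε
    rw [erfc_mul_exp_eq (div_sqrt_pos hxa ht hε).ne', erfc_mul_exp_eq (div_sqrt_pos hxb ht hε).ne']
    rfl
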